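/- Let ⟨D_S, f_S⟩ and ⟨D_T, f_T⟩ be a source and a target domain over X, and let H be a hypothesis class of binary classifiers with VC-dimension d. Let U_S and U_T be unlabeled i.i.d. samples of size m each drawn from D_S and D_T, and let d̂_{HΔH}(U_S, U_T) denote the HΔH-divergence between the empirical distributions of U_S and U_T. Let h* ∈ H minimize ε_S(h) + ε_T(h) and set λ := ε_S(h*) + ε_T(h*). Then with probability at least 1 − δ over the choice of the samples, for every h ∈ H: ε_T(h) ≤ ε_S(h) + (1/2)·d̂_{HΔH}(U_S, U_T) + 4·√((2d·log(2m) + log(4/δ))/m) + λ. -/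

import Mathlib

/-!
The population divergence `d_{HΔH}(D_S, D_T)` is a fixed number that only has to be bounded
above by the empirical one, so it suffices to control the samples on a single set: pick `g ∈ HΔH`
whose discrepancy `|D_S(A) - D_T(A)|` on `A = {g = 1}` is within `2r` of the supremum, where
`r = √((2d log(2m) + log(4/δ))/m)`. By Hoeffding's inequality the empirical frequencies of `A` in
the two samples are within `r` of `D_S(A)` and `D_T(A)` outside an event of probability at most
`4 exp(-2mr²) ≤ δ`, and there `½ d_{HΔH}(D_S, D_T) ≤ ½ d̂_{HΔH}(U_S, U_T) + 4r`. It remains to use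
the population bound `ε_T(h) ≤ ε_S(h) + ½ d_{HΔH}(D_S, D_T) + λ`, which comes from the triangle
inequality through `h*`.
-/

open MeasureTheory Real Filter
open scoped ENNReal NNReal

noncomputable section

variable {X : Type*}

/-- Error of `g` w.r.t. `g'` under distribution `D`: `E_{x ~ D} |g x - g' x|`. -/
def errE [MeasurableSpace X] (D : Measure X) (g g' : X → ℝ) : ℝ :=
  ∫ x, |g x - g' x| ∂D

/-- A binary hypothesis takes values in `{0, 1}`. -/
def IsBinary (h : X → ℝ) : Prop := ∀ x, h x = 0 ∨ h x = 1

/-- The collection `A_H` of supports of hypotheses in a class `H`. -/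
def supports (H : Set (X → ℝ)) : Set (Set X) := {A | ∃ h ∈ H, A = {x | h x = 1}}

/-- `H`-divergence between two distributions:
`d_H(D, D') = 2 sup_{A ∈ A_H} |Pr_D(A) - Pr_{D'}(A)|`. -/
def dHdiv [MeasurableSpace X] (H : Set (X → ℝ)) (D D' : Measure X) : ℝ :=
  2 * sSup {r | ∃ h ∈ H, r = |(D {x | h x = 1}).toReal - (D' {x | h x = 1}).toReal|}

/-- Symmetric difference hypothesis class `H Δ H`
(`h ⊕ h'` is `|h - h'|` for `{0,1}`-valued functions). -/
def symmDiffClass (H : Set (X → ℝ)) : Set (X → ℝ) :=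
  {g | ∃ h ∈ H, ∃ h' ∈ H, g = fun x => |h x - h' x|}

/-- Multi-source divergence: `d_H(D_T; {D_{S_i}}) = max_i d_H(D_T, D_{S_i})`. -/
def dHmulti [MeasurableSpace X] (H : Set (X → ℝ)) (DT : Measure X) {k : ℕ}
    (DS : Fin k → Measure X) : ℝ :=
  ⨆ i : Fin k, dHdiv H DT (DS i)

/-- A set family `C` shatters a finite set `s`. -/
def ShattersSet (C : Set (Set X)) (s : Finset X) : Prop :=
  ∀ t : Set X, t ⊆ (s : Set X) → ∃ A ∈ C, (s : Set X) ∩ A = t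

/-- The VC dimension of a set family `C` equals `d`. -/
def VCDimEq (C : Set (Set X)) (d : ℕ) : Prop :=
  (∃ s : Finset X, s.card = d ∧ ShattersSet C s) ∧
  ∀ s : Finset X, ShattersSet C s → s.card ≤ d

/-- Empirical (uniform) measure of a sample of size `m`. -/
def empMeasure [MeasurableSpace X] {m : ℕ} (xs : Fin m → X) : Measure X :=
  (m : ℝ≥0∞)⁻¹ • ∑ i, Measure.dirac (xs i)

/-- Empirical risk of `h` w.r.t. labeling `f` over the sample `xs`. -/
def empRisk {m : ℕ} (xs : Fin m → X) (h f : X → ℝ) : ℝ :=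
  (∑ i, |h (xs i) - f (xs i)|) / m

section Binary

variable {α : Type*} {h h' : α → ℝ}

lemma IsBinary.mem_Icc (hh : IsBinary h) (x : α) : h x ∈ Set.Icc (0 : ℝ) 1 := by
  rcases hh x with hx | hx <;> simp [hx]

lemma IsBinary.abs_sub (hh : IsBinary h) (hh' : IsBinary h') : IsBinary fun x ↦ |h x - h' x| :=
  fun x ↦ by rcases hh x with hx | hx <;> rcases hh' x with hx' | hx' <;> simp [hx, hx']

lemma IsBinary.integrable [MeasurableSpace α] {μ : Measure α} [IsFiniteMeasure μ]
    (hh : IsBinary h) (hm : Measurable h) : Integrable h μ :=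
  .of_mem_Icc 0 1 hm.aemeasurable (ae_of_all _ hh.mem_Icc)

lemma IsBinary.integral_eq_measureReal [MeasurableSpace α] {μ : Measure α} (hh : IsBinary h)
    (hm : Measurable h) :
    ∫ x, h x ∂μ = μ.real {x | h x = 1} := by
  have h_ind : h = {x | h x = 1}.indicator 1 := funext fun x ↦ by
    rcases hh x with hx | hx <;> simp [hx]
  conv_lhs => rw [h_ind]
  exact integral_indicator_one (hm (measurableSet_singleton 1))

end Binary

section Risk

variable {α : Type*} [MeasurableSpace α] {D : Measure α}

lemma errE_comm (g g' : α → ℝ) : errE D g g' = errE D g' g := by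
  simp only [errE, abs_sub_comm]

lemma errE_le_add {g g' g'' : α → ℝ} (hg : Integrable g D) (hg' : Integrable g' D)
    (hg'' : Integrable g'' D) : errE D g g'' ≤ errE D g g' + errE D g' g'' := by
  have h₁ := (hg.sub hg').abs
  have h₂ := (hg'.sub hg'').abs
  calc errE D g g'' ≤ ∫ x, (|g x - g' x| + |g' x - g'' x|) ∂D :=
        integral_mono (hg.sub hg'').abs (h₁.add h₂) fun x ↦ abs_sub_le _ _ _
    _ = errE D g g' + errE D g' g'' := integral_add h₁ h₂

lemma errE_eq_measureReal {h h' : α → ℝ} (hh : IsBinary h) (hh' : IsBinary h')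
    (hm : Measurable h) (hm' : Measurable h') :
    errE D h h' = D.real {x | |h x - h' x| = 1} :=
  (hh.abs_sub hh').integral_eq_measureReal (hm.sub hm').abs

end Risk

section Divergence

variable {α : Type*} [MeasurableSpace α] {D D' : Measure α} {C : Set (α → ℝ)}

lemma abs_measureReal_sub_le_half_dHdiv [IsFiniteMeasure D] [IsFiniteMeasure D'] {g : α → ℝ}
    (hg : g ∈ C) : |D.real {x | g x = 1} - D'.real {x | g x = 1}| ≤ dHdiv C D D' / 2 := by
  have h_bdd : BddAbove {r | ∃ g ∈ C,
      r = |(D {x | g x = 1}).toReal - (D' {x | g x = 1}).toReal|} := by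
    refine ⟨D.real Set.univ + D'.real Set.univ, ?_⟩
    rintro r ⟨g, -, rfl⟩
    refine (abs_sub _ _).trans ?_
    rw [abs_of_nonneg ENNReal.toReal_nonneg, abs_of_nonneg ENNReal.toReal_nonneg]
    exact add_le_add (measureReal_mono (Set.subset_univ _)) (measureReal_mono (Set.subset_univ _))
  rw [dHdiv, mul_div_cancel_left₀ _ two_ne_zero]
  exact le_csSup h_bdd ⟨g, hg, rfl⟩

lemma exists_lt_abs_measureReal_sub_of_lt_half_dHdiv (hC : C.Nonempty) {r : ℝ}
    (hr : r < dHdiv C D D' / 2) : ∃ g ∈ C, r < |D.real {x | g x = 1} - D'.real {x | g x = 1}| := by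
  rw [dHdiv, mul_div_cancel_left₀ _ two_ne_zero] at hr
  obtain ⟨g₀, hg₀⟩ := hC
  obtain ⟨_, ⟨g, hg, rfl⟩, hlt⟩ := exists_lt_of_lt_csSup (by exact ⟨_, g₀, hg₀, rfl⟩) hr
  exact ⟨g, hg, hlt⟩

lemma measurable_of_mem_symmDiffClass {H : Set (α → ℝ)} (hmeas : ∀ h ∈ H, Measurable h)
    {g : α → ℝ} (hg : g ∈ symmDiffClass H) : Measurable g := by
  obtain ⟨h, hh, h', hh', rfl⟩ := hg
  exact ((hmeas h hh).sub (hmeas h' hh')).abs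

end Divergence

/-- The population bound of Ben-David et al.: `h` and `hstar` disagree exactly on the support of
`|h - hstar| ∈ H Δ H`, whose mass changes by at most half the divergence from source to target. -/
theorem errE_le_errE_add_half_dHdiv_add {α : Type*} [MeasurableSpace α] {DS DT : Measure α}
    [IsFiniteMeasure DS] [IsFiniteMeasure DT] {fS fT : α → ℝ} (hfS : Integrable fS DS)
    (hfT : Integrable fT DT) {H : Set (α → ℝ)} (hbin : ∀ h ∈ H, IsBinary h)
    (hmeas : ∀ h ∈ H, Measurable h) {h hstar : α → ℝ} (hh : h ∈ H) (hstarH : hstar ∈ H) :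
    errE DT h fT ≤ errE DS h fS + dHdiv (symmDiffClass H) DS DT / 2
      + (errE DS hstar fS + errE DT hstar fT) := by
  set A := {x | |h x - hstar x| = 1}
  have hA_DS : errE DS h hstar = DS.real A :=
    errE_eq_measureReal (hbin h hh) (hbin hstar hstarH) (hmeas h hh) (hmeas hstar hstarH)
  have hA_DT : errE DT h hstar = DT.real A :=
    errE_eq_measureReal (hbin h hh) (hbin hstar hstarH) (hmeas h hh) (hmeas hstar hstarH)
  have h_shift : |DS.real A - DT.real A| ≤ dHdiv (symmDiffClass H) DS DT / 2 :=
    abs_measureReal_sub_le_half_dHdiv (g := fun x ↦ |h x - hstar x|) ⟨h, hh, hstar, hstarH, rfl⟩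
  have h_target := errE_le_add ((hbin h hh).integrable (hmeas h hh))
    ((hbin hstar hstarH).integrable (hmeas hstar hstarH)) hfT
  have h_source := errE_le_add ((hbin h hh).integrable (hmeas h hh)) hfS
    ((hbin hstar hstarH).integrable (hmeas hstar hstarH))
  rw [errE_comm fS] at h_source
  linarith [neg_abs_le (DS.real A - DT.real A)]

section EmpiricalMeasure

variable {α : Type*} [MeasurableSpace α] {m : ℕ}

lemma empMeasure_real_apply (xs : Fin m → α) {A : Set α} (hA : MeasurableSet A) :
    (empMeasure xs).real A = (∑ i, A.indicator 1 (xs i)) / m := by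
  simp only [Measure.real, empMeasure, Measure.smul_apply, Measure.coe_finsetSum,
    Finset.sum_apply, Measure.dirac_apply' _ hA, smul_eq_mul, ENNReal.toReal_mul,
    ENNReal.toReal_inv, ENNReal.toReal_natCast, div_eq_inv_mul]
  rw [ENNReal.toReal_sum fun i _ ↦ by by_cases h : xs i ∈ A <;> simp [h]]
  congr 2 with i
  by_cases h : xs i ∈ A <;> simp [h]

lemma isProbabilityMeasure_empMeasure (hm : 0 < m) (xs : Fin m → α) :
    IsProbabilityMeasure (empMeasure xs) :=
  ⟨by simp [empMeasure,
    ENNReal.inv_mul_cancel (Nat.cast_ne_zero.2 hm.ne') (ENNReal.natCast_ne_top m)]⟩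

end EmpiricalMeasure

section Concentration

open ProbabilityTheory

lemma measureReal_abs_sum_ge_le_of_iIndepFun {Ω ι : Type*} [MeasurableSpace Ω] {μ : Measure Ω}
    [IsFiniteMeasure μ] {Y : ι → Ω → ℝ} (h_indep : iIndepFun Y μ) {c : ℝ≥0} {s : Finset ι}
    (h_subG : ∀ i ∈ s, HasSubgaussianMGF (Y i) c μ) {ε : ℝ} (hε : 0 ≤ ε) :
    μ.real {ω | ε ≤ |∑ i ∈ s, Y i ω|} ≤ 2 * exp (-ε ^ 2 / (2 * (s.card * c))) := by
  have h_neg : iIndepFun (fun i ↦ -Y i) μ := h_indep.comp (fun _ ↦ Neg.neg) fun _ ↦ measurable_neg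
  have h_upper := HasSubgaussianMGF.measure_sum_ge_le_of_iIndepFun h_indep h_subG hε
  have h_lower := HasSubgaussianMGF.measure_sum_ge_le_of_iIndepFun h_neg
    (fun i hi ↦ (h_subG i hi).neg) hε
  simp only [Finset.sum_const, nsmul_eq_mul, NNReal.coe_mul, NNReal.coe_natCast,
    Pi.neg_apply, Finset.sum_neg_distrib] at h_upper h_lower
  calc μ.real {ω | ε ≤ |∑ i ∈ s, Y i ω|}
      ≤ μ.real ({ω | ε ≤ ∑ i ∈ s, Y i ω} ∪ {ω | ε ≤ -∑ i ∈ s, Y i ω}) :=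
        measureReal_mono fun ω hω ↦ by
          rcases le_abs'.1 hω.out with h | h
          exacts [.inr (le_neg.mpr h), .inl h]
    _ ≤ _ := (measureReal_union_le _ _).trans (by linarith)

variable {α : Type*} [MeasurableSpace α]

lemma measureReal_abs_empMeasure_sub_ge_le {μ : Measure α} [IsProbabilityMeasure μ] {A : Set α}
    (hA : MeasurableSet A) {m : ℕ} (hm : 0 < m) {t : ℝ} (ht : 0 ≤ t) :
    (Measure.pi fun _ : Fin m ↦ μ).real {xs | t ≤ |(empMeasure xs).real A - μ.real A|}
      ≤ 2 * exp (-(2 * m * t ^ 2)) := by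
  set p := μ.real A
  set Y : α → ℝ := fun x ↦ A.indicator 1 x - p
  have hY : Measurable Y := (measurable_one.indicator hA).sub_const p
  have hY_mem : ∀ x, Y x ∈ Set.Icc (-p) (1 - p) := fun x ↦ by
    by_cases hx : x ∈ A <;> simp [Y, hx, p]
  have hY_mean : ∫ x, Y x ∂μ = 0 := by
    have h_ind : Integrable (A.indicator (1 : α → ℝ)) μ := (integrable_const 1).indicator hA
    rw [integral_sub h_ind (integrable_const p), integral_indicator_one hA]
    simp [p]
  have h_width : ‖1 - p - -p‖₊ = 1 := by simp
  have h_subG : ∀ i : Fin m,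
      HasSubgaussianMGF (fun xs ↦ Y (xs i)) ((1 / 2) ^ 2) (Measure.pi fun _ ↦ μ) := fun i ↦ by
    simpa [h_width] using hasSubgaussianMGF_of_mem_Icc_of_integral_eq_zero
      (X := fun xs : Fin m → α ↦ Y (xs i)) (hY.comp (measurable_pi_apply i)).aemeasurable
      (ae_of_all _ fun xs ↦ hY_mem (xs i)) (by rwa [integral_comp_eval hY.aestronglyMeasurable])
  have h_indep : iIndepFun (fun i (xs : Fin m → α) ↦ Y (xs i)) (Measure.pi fun _ ↦ μ) :=
    iIndepFun_pi fun _ ↦ hY.aemeasurable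
  have hm' : (0 : ℝ) < m := Nat.cast_pos.2 hm
  have h_dev : ∀ xs : Fin m → α, (empMeasure xs).real A - p = (∑ i, Y (xs i)) / m := fun xs ↦ by
    rw [empMeasure_real_apply xs hA, Finset.sum_sub_distrib]
    field_simp
    simp
  convert measureReal_abs_sum_ge_le_of_iIndepFun h_indep (s := Finset.univ)
    (fun i _ ↦ h_subG i) (mul_nonneg hm'.le ht) using 3
  · ext xs
    simp only [h_dev, abs_div, abs_of_pos hm', le_div_iff₀ hm', mul_comm t]
  · simp only [Finset.card_univ, Fintype.card_fin]
    push_cast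
    field_simp

lemma one_sub_le_measureReal_prod {β : Type*} [MeasurableSpace β] {μ : Measure α} {ν : Measure β}
    [IsProbabilityMeasure μ] [IsProbabilityMeasure ν] (s : Set α) (t : Set β) :
    1 - (μ.real sᶜ + ν.real tᶜ) ≤ (μ.prod ν).real (s ×ˢ t) := by
  have h_univ : (1 : ℝ) ≤ (μ.prod ν).real (s ×ˢ t) + (μ.prod ν).real (s ×ˢ t)ᶜ := by
    rw [← probReal_univ (μ := μ.prod ν), ← Set.union_compl_self (s ×ˢ t)]
    exact measureReal_union_le _ _
  have h_compl : (μ.prod ν).real (s ×ˢ t)ᶜ ≤ μ.real sᶜ + ν.real tᶜ := by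
    rw [Set.compl_prod_eq_union]
    refine (measureReal_union_le _ _).trans_eq ?_
    simp [measureReal_prod_prod]
  linarith

lemma one_sub_le_measureReal_prod_empMeasure_close {μ ν : Measure α} [IsProbabilityMeasure μ]
    [IsProbabilityMeasure ν] {A : Set α} (hA : MeasurableSet A) {m : ℕ} (hm : 0 < m) {t : ℝ}
    (ht : 0 ≤ t) :
    1 - 4 * exp (-(2 * m * t ^ 2))
      ≤ ((Measure.pi fun _ : Fin m ↦ μ).prod (Measure.pi fun _ : Fin m ↦ ν)).real
          ({xs | |(empMeasure xs).real A - μ.real A| < t} ×ˢ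
            {ys | |(empMeasure ys).real A - ν.real A| < t}) := by
  refine le_trans ?_ (one_sub_le_measureReal_prod _ _)
  simp only [Set.compl_ofPred, not_lt]
  linarith [measureReal_abs_empMeasure_sub_ge_le (μ := μ) hA hm ht,
    measureReal_abs_empMeasure_sub_ge_le (μ := ν) hA hm ht]

end Concentration

lemma four_mul_exp_neg_two_mul_sq_sqrt_le {δ L : ℝ} {m : ℕ} (hm : 0 < m) (hδ : 0 < δ)
    (hL : 0 ≤ L) (h_log : log (4 / δ) ≤ L) : 4 * exp (-(2 * m * √(L / m) ^ 2)) ≤ δ := by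
  have h_sq : m * √(L / m) ^ 2 = L := by
    rw [sq_sqrt (div_nonneg hL (Nat.cast_nonneg m))]
    field_simp
  calc 4 * exp (-(2 * m * √(L / m) ^ 2)) ≤ 4 * exp (-log (4 / δ)) := by gcongr; linarith
    _ = δ := by rw [exp_neg, exp_log (by positivity)]; field_simp

lemma abs_sub_le_abs_sub_add_two_mul {a b a' b' r : ℝ} (ha : |a' - a| < r) (hb : |b' - b| < r) :
    |a - b| ≤ |a' - b'| + 2 * r := by
  obtain ⟨ha₁, ha₂⟩ := abs_lt.1 ha
  obtain ⟨hb₁, hb₂⟩ := abs_lt.1 hb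
  rw [abs_le]
  constructor <;> linarith [neg_abs_le (a' - b'), le_abs_self (a' - b')]

theorem single_source_generalization_bound_general [MeasurableSpace X] {d m : ℕ} (hm : 0 < m)
    (DS DT : Measure X) [IsProbabilityMeasure DS] [IsProbabilityMeasure DT]
    (fS fT : X → ℝ) (hfS : Measurable fS) (hfT : Measurable fT)
    (hfSb : ∀ x, fS x ∈ Set.Icc (0:ℝ) 1) (hfTb : ∀ x, fT x ∈ Set.Icc (0:ℝ) 1)
    (H : Set (X → ℝ)) (hbin : ∀ h ∈ H, IsBinary h) (hmeas : ∀ h ∈ H, Measurable h)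
    (hstar : X → ℝ) (hstarH : hstar ∈ H)
    (lam : ℝ) (hlam : lam = errE DS hstar fS + errE DT hstar fT)
    (δ : ℝ) (hδ : 0 < δ) (hδ1 : δ < 1) :
    ENNReal.ofReal (1 - δ) ≤
      ((Measure.pi fun _ : Fin m => DS).prod (Measure.pi fun _ : Fin m => DT))
        {ω : (Fin m → X) × (Fin m → X) | ∀ h ∈ H,
          errE DT h fT
            ≤ errE DS h fS
              + (1 / 2) * dHdiv (symmDiffClass H) (empMeasure ω.1) (empMeasure ω.2)
              + 4 * Real.sqrt ((2 * d * Real.log (2 * m) + Real.log (4 / δ)) / m)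
              + lam} := by
  set L := 2 * d * log (2 * m) + log (4 / δ)
  have h_log : log (4 / δ) ≤ L := le_add_of_nonneg_left <| mul_nonneg (by positivity) <|
    log_nonneg (by linarith [(Nat.one_le_cast (α := ℝ)).2 hm])
  have hL : 0 < L := (log_pos (by rw [lt_div_iff₀ hδ]; linarith)).trans_le h_log
  set r := √(L / m)
  have hr : 0 < r := sqrt_pos.2 (div_pos hL (Nat.cast_pos.2 hm))
  obtain ⟨g, hg, h_gap⟩ := exists_lt_abs_measureReal_sub_of_lt_half_dHdiv
    (C := symmDiffClass H) (D := DS) (D' := DT) ⟨_, hstar, hstarH, hstar, hstarH, rfl⟩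
    (sub_lt_self _ (by positivity : 0 < 2 * r))
  set A := {x | g x = 1}
  have hA : MeasurableSet A := measurable_of_mem_symmDiffClass hmeas hg (measurableSet_singleton 1)
  have h_good : ENNReal.ofReal (1 - δ) ≤
      ((Measure.pi fun _ : Fin m => DS).prod (Measure.pi fun _ : Fin m => DT))
        ({xs | |(empMeasure xs).real A - DS.real A| < r} ×ˢ
          {ys | |(empMeasure ys).real A - DT.real A| < r}) := by
    rw [ENNReal.ofReal_le_iff_le_toReal (measure_ne_top _ _), ← measureReal_def]
    linarith [one_sub_le_measureReal_prod_empMeasure_close (μ := DS) (ν := DT) hA hm hr.le,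
      four_mul_exp_neg_two_mul_sq_sqrt_le hm hδ hL.le h_log]
  refine h_good.trans (measure_mono ?_)
  rintro ⟨xs, ys⟩ ⟨hxs, hys⟩ h hh
  have := isProbabilityMeasure_empMeasure hm xs
  have := isProbabilityMeasure_empMeasure hm ys
  have h_emp := abs_measureReal_sub_le_half_dHdiv (D := empMeasure xs) (D' := empMeasure ys) hg
  have h_pop := errE_le_errE_add_half_dHdiv_add
    (.of_mem_Icc 0 1 hfS.aemeasurable (ae_of_all DS hfSb))
    (.of_mem_Icc 0 1 hfT.aemeasurable (ae_of_all DT hfTb)) hbin hmeas hh hstarH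
  dsimp only
  linarith [abs_sub_le_abs_sub_add_two_mul hxs.out hys.out]

/-- Single-source generalization bound of Blitzer et al. (Theorem 1 of the paper):
with probability at least `1 - δ` over the draw of the two unlabeled samples,
`ε_T(h) ≤ ε_S(h) + (1/2) d̂_{HΔH}(U_S, U_T) + 4 √((2 d log(2m) + log(4/δ))/m) + λ`
for every `h ∈ H`. -/
theorem single_source_generalization_bound [MeasurableSpace X] {d m : ℕ} (hm : 0 < m)
    (DS DT : Measure X) [IsProbabilityMeasure DS] [IsProbabilityMeasure DT]
    (fS fT : X → ℝ) (hfS : Measurable fS) (hfT : Measurable fT)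
    (hfSb : ∀ x, fS x ∈ Set.Icc (0:ℝ) 1) (hfTb : ∀ x, fT x ∈ Set.Icc (0:ℝ) 1)
    (H : Set (X → ℝ)) (hbin : ∀ h ∈ H, IsBinary h) (hmeas : ∀ h ∈ H, Measurable h)
    (hVC : VCDimEq (supports H) d)
    (hstar : X → ℝ) (hstarH : hstar ∈ H)
    (hstarOpt : ∀ h ∈ H,
      errE DS hstar fS + errE DT hstar fT ≤ errE DS h fS + errE DT h fT)
    (lam : ℝ) (hlam : lam = errE DS hstar fS + errE DT hstar fT)
    (δ : ℝ) (hδ : 0 < δ) (hδ1 : δ < 1) :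
    ENNReal.ofReal (1 - δ) ≤
      ((Measure.pi fun _ : Fin m => DS).prod (Measure.pi fun _ : Fin m => DT))
        {ω : (Fin m → X) × (Fin m → X) | ∀ h ∈ H,
          errE DT h fT
            ≤ errE DS h fS
              + (1 / 2) * dHdiv (symmDiffClass H) (empMeasure ω.1) (empMeasure ω.2)
              + 4 * Real.sqrt ((2 * d * Real.log (2 * m) + Real.log (4 / δ)) / m)
              + lam} :=
  single_source_generalization_bound_general hm DS DT fS fT hfS hfT hfSb hfTb H hbin hmeas hstar
    hstarH lam hlam δ hδ hδ1
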